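/- arXiv:1706.04850 — 2 statements merged into one kernel-verified Lean document; each statement's English description precedes it below -/
import Mathlib

section
/- Let G be a finite group acting by automorphisms on a nilpotent group N admitting a G-stable central series 1 = N_k ⊴ N_{k-1} ⊴ ⋯ ⊴ N_0 = N (each N_{i+1} normal in N with N_i/N_{i+1} central in N/N_{i+1}) whose successive quotients N_i/N_{i+1} are uniquely divisible abelian groups. Then the non-abelian cohomology pointed set H¹(G, N) is trivial. -/
/-- A 1-cocycle of a group `G` acting on a group `N` via `φ`. -/
def IsCocycle {G N : Type*} [Group G] [Group N] (φ : G →* MulAut N) (α : G → N) : Prop :=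
  ∀ g h : G, α (g * h) = α g * φ g (α h)

/-- Two maps `G → N` are cohomologous. -/
def Cohomologous {G N : Type*} [Group G] [Group N] (φ : G →* MulAut N) (α β : G → N) : Prop :=
  ∃ n : N, ∀ g : G, β g = n⁻¹ * α g * φ g n

/-- Let a finite group `G` act on a nilpotent group `N` admitting a `G`-stable central
series `⊤ = Nseq 0 ⊵ ⋯ ⊵ Nseq k = ⊥` whose successive quotients are uniquely divisible
abelian groups.  Then `H¹(G, N)` is trivial: every cocycle is a coboundary. -/
theorem H1_trivial_of_finite_group_uniquely_divisible_nilpotent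
    {G N : Type*} [Group G] [Group N] [Finite G]
    (φ : G →* MulAut N) (k : ℕ) (Nseq : ℕ → Subgroup N)
    (h_top : Nseq 0 = ⊤) (h_bot : Nseq k = ⊥)
    (h_mono : ∀ i : ℕ, Nseq (i + 1) ≤ Nseq i)
    (h_norm : ∀ i : ℕ, ∀ x ∈ Nseq i, ∀ u : N, u * x * u⁻¹ ∈ Nseq i)
    (h_central : ∀ i : ℕ, ∀ x ∈ Nseq i, ∀ u : N, x * u * x⁻¹ * u⁻¹ ∈ Nseq (i + 1))
    (h_stable : ∀ i : ℕ, ∀ g : G, ∀ x ∈ Nseq i, φ g x ∈ Nseq i)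
    (h_div : ∀ i : ℕ, ∀ x ∈ Nseq i, ∀ m : ℕ, 0 < m →
      ∃ y ∈ Nseq i, x⁻¹ * y ^ m ∈ Nseq (i + 1))
    (h_uniq : ∀ i : ℕ, ∀ m : ℕ, 0 < m → ∀ y ∈ Nseq i, ∀ z ∈ Nseq i,
      (y ^ m)⁻¹ * z ^ m ∈ Nseq (i + 1) → y⁻¹ * z ∈ Nseq (i + 1)) :
    ∀ α : G → N, IsCocycle φ α → Cohomologous φ α (fun _ => 1) := by
  classical
  haveI := Fintype.ofFinite G
  have hle : ∀ i j : ℕ, Nseq (i + j) ≤ Nseq i := by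
    intro i j
    induction j with
    | zero => exact le_rfl
    | succ j ih => exact (h_mono (i + j)).trans ih
  have main : ∀ d i : ℕ, k ≤ i + d → ∀ α : G → N, IsCocycle φ α →
      (∀ g, α g ∈ Nseq i) → ∃ n ∈ Nseq i, ∀ g, α g = n * φ g n⁻¹ := by
    intro d
    induction d with
    | zero =>
      intro i hi α _ hmem
      refine ⟨1, one_mem _, fun g => ?_⟩
      have h1 : Nseq i ≤ Nseq k := by
        have := hle k (i - k)
        rwa [Nat.add_sub_cancel' (by omega)] at this
      have : α g ∈ (⊥ : Subgroup N) := h_bot ▸ h1 (hmem g)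
      simp [Subgroup.mem_bot.mp this]
    | succ d ih =>
      intro i hi α hcoc hmem
      -- set up the abelian quotient Nseq i / Nseq (i+1)
      set K : Subgroup (Nseq i) := (Nseq (i + 1)).subgroupOf (Nseq i) with hKdef
      haveI hKn : K.Normal := by
        constructor
        intro x hx h
        simp only [hKdef, Subgroup.mem_subgroupOf] at hx ⊢
        simpa using h_norm (i + 1) (x : N) hx (h : N)
      letI : CommGroup (Nseq i ⧸ K) :=
        { (inferInstance : Group (Nseq i ⧸ K)) with
          mul_comm := by
            intro a b
            induction a using QuotientGroup.induction_on with
            | H x =>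
            induction b using QuotientGroup.induction_on with
            | H y =>
            rw [← QuotientGroup.mk_mul, ← QuotientGroup.mk_mul, QuotientGroup.eq]
            simp only [hKdef, Subgroup.mem_subgroupOf]
            have h2 : (((x * y)⁻¹ * (y * x) : Nseq i) : N)
                = (y : N)⁻¹ * (x : N)⁻¹ * ((y : N)⁻¹)⁻¹ * ((x : N)⁻¹)⁻¹ := by
              push_cast; group
            rw [h2]
            exact h_central i (y : N)⁻¹ (inv_mem y.2) (x : N)⁻¹ }
      -- the action of G on Nseq i and on the quotient
      let ψ : G → Nseq i →* Nseq i := fun g =>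
        { toFun := fun x => ⟨φ g (x : N), h_stable i g (x : N) x.2⟩
          map_one' := by ext; simp
          map_mul' := by intro x y; ext; simp }
      have hψK : ∀ g : G, K ≤ K.comap (ψ g) := by
        intro g x hx
        simp only [hKdef, Subgroup.mem_comap, Subgroup.mem_subgroupOf] at hx ⊢
        exact h_stable (i + 1) g (x : N) hx
      let τ : G → (Nseq i ⧸ K) →* (Nseq i ⧸ K) := fun g =>
        QuotientGroup.map K K (ψ g) (hψK g)
      let αH : G → Nseq i := fun g => ⟨α g, hmem g⟩
      let a : G → Nseq i ⧸ K := fun g => (αH g : Nseq i ⧸ K)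
      have hcoc' : ∀ g h : G, a (g * h) = a g * τ g (a h) := by
        intro g h
        have h1 : αH (g * h) = αH g * ψ g (αH h) := by
          ext; exact hcoc g h
        show (↑(αH (g * h)) : Nseq i ⧸ K) = _
        rw [h1, QuotientGroup.mk_mul]
        rfl
      set m : ℕ := Fintype.card G with hmdef
      have hm : 0 < m := Fintype.card_pos
      set S : Nseq i ⧸ K := ∏ h : G, a h with hSdef
      have hkey : ∀ g : G, (a g) ^ m * τ g S = S := by
        intro g
        have h1 : ∏ h : G, a (g * h) = S :=
          Fintype.prod_equiv (Equiv.mulLeft g) _ _ (fun h => rfl)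
        have h2 : ∏ h : G, (a g * τ g (a h)) = (a g) ^ m * τ g S := by
          rw [Finset.prod_mul_distrib, Finset.prod_const, Finset.card_univ, hSdef, map_prod]
        have h3 : ∏ h : G, (a g * τ g (a h)) = ∏ h : G, a (g * h) :=
          Finset.prod_congr rfl fun h _ => (hcoc' g h).symm
        rw [← h2, h3, h1]
      -- pick an m-th root b of S mod Nseq (i+1)
      obtain ⟨s, hs⟩ := QuotientGroup.mk_surjective S
      obtain ⟨y, hyi, hy⟩ := h_div i (s : N) s.2 m hm
      let b : Nseq i := ⟨y, hyi⟩
      have hbS : S = (b : Nseq i ⧸ K) ^ m := by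
        rw [← hs, ← QuotientGroup.mk_pow, QuotientGroup.eq]
        simp only [hKdef, Subgroup.mem_subgroupOf]
        have h3 : ((s⁻¹ * b ^ m : Nseq i) : N) = (s : N)⁻¹ * y ^ m := by push_cast; rfl
        rw [h3]; exact hy
      have hmain : ∀ g : G, (α g)⁻¹ * (y * (φ g y)⁻¹) ∈ Nseq (i + 1) := by
        intro g
        have e1 : τ g ((b : Nseq i ⧸ K)) = ((ψ g b : Nseq i) : Nseq i ⧸ K) :=
          QuotientGroup.map_mk K K (ψ g) (hψK g) b
        have e2 := hkey g
        rw [hbS, map_pow, e1] at e2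
        have e3 : (a g) ^ m = (((b * (ψ g b)⁻¹ : Nseq i) : Nseq i ⧸ K)) ^ m := by
          rw [QuotientGroup.mk_mul, QuotientGroup.mk_inv, mul_pow, inv_pow]
          exact eq_mul_inv_of_mul_eq e2
        rw [show a g = ((αH g : Nseq i) : Nseq i ⧸ K) from rfl] at e3
        rw [← QuotientGroup.mk_pow, ← QuotientGroup.mk_pow, QuotientGroup.eq] at e3
        simp only [hKdef, Subgroup.mem_subgroupOf] at e3
        have h4 : ((((αH g) ^ m)⁻¹ * (b * (ψ g b)⁻¹) ^ m : Nseq i) : N)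
            = ((α g) ^ m)⁻¹ * (y * (φ g y)⁻¹) ^ m := by push_cast; rfl
        rw [h4] at e3
        exact h_uniq i m hm (α g) (hmem g) (y * (φ g y)⁻¹)
          (mul_mem hyi (inv_mem (h_stable i g y hyi))) e3
      -- the corrected cocycle β with values in Nseq (i+1)
      let β : G → N := fun g => y⁻¹ * α g * φ g y
      have hβcoc : IsCocycle φ β := by
        intro g h
        show y⁻¹ * α (g * h) * φ (g * h) y
          = (y⁻¹ * α g * φ g y) * φ g (y⁻¹ * α h * φ h y)
        rw [hcoc g h, map_mul φ g h]
        simp only [MulAut.mul_apply, map_mul, map_inv]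
        group
      have hβmem : ∀ g, β g ∈ Nseq (i + 1) := by
        intro g
        have hc := h_norm (i + 1) _ (inv_mem (hmain g)) (φ g y)⁻¹
        have hβeq : β g = (φ g y)⁻¹ * ((α g)⁻¹ * (y * (φ g y)⁻¹))⁻¹ * ((φ g y)⁻¹)⁻¹ := by
          show y⁻¹ * α g * φ g y = _
          group
        rw [hβeq]; exact hc
      obtain ⟨n, hn, hβ⟩ := ih (i + 1) (by omega) β hβcoc hβmem
      refine ⟨y * n, mul_mem hyi (h_mono i hn), fun g => ?_⟩
      have hα : α g = y * β g * (φ g y)⁻¹ := by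
        show α g = y * (y⁻¹ * α g * φ g y) * (φ g y)⁻¹
        group
      rw [hα, hβ g]
      simp only [mul_inv_rev, map_mul, map_inv]
      group
  intro α hcoc
  obtain ⟨n, _, hn⟩ := main k 0 (by omega) α hcoc (fun g => h_top ▸ Subgroup.mem_top _)
  refine ⟨n, fun g => ?_⟩
  rw [hn g]
  simp only [map_inv]
  group
end

section
/- Let G be a group, H a normal subgroup of finite index, and N a nilpotent G-group all of whose lower central series quotients γ_i(N)/γ_{i+1}(N) are uniquely divisible abelian groups. Then the restriction map H¹(G, N) → H¹(H, N) on non-abelian first cohomology is injective. -/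
section Cocycles

variable {G N : Type*} [Group G] [Group N] {φ : G →* MulAut N} {α β δ : G → N}

theorem Cohomologous.symm (h : Cohomologous φ α β) : Cohomologous φ β α := by
  obtain ⟨n, hn⟩ := h
  exact ⟨n⁻¹, fun g => by rw [hn, map_inv]; group⟩

theorem Cohomologous.trans (h₁ : Cohomologous φ α β) (h₂ : Cohomologous φ β δ) :
    Cohomologous φ α δ := by
  obtain ⟨m, hm⟩ := h₁
  obtain ⟨n, hn⟩ := h₂
  exact ⟨m * n, fun g => by rw [hn, hm, map_mul]; group⟩

theorem IsCocycle.of_cohomologous (hα : IsCocycle φ α) (h : Cohomologous φ α β) :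
    IsCocycle φ β := by
  obtain ⟨n, hn⟩ := h
  intro g g'
  rw [hn, hn, hn, hα, map_mul, MulAut.mul_apply, map_mul, map_mul, map_inv]
  group

/-- Serre's twist of `φ` by the cocycle `α`. -/
def IsCocycle.twist (hα : IsCocycle φ α) : G →* MulAut N :=
  MonoidHom.mk' (fun g => MulAut.conj (α g) * φ g) fun a b => by
    ext x
    simp only [MulAut.mul_apply, MulAut.conj_apply, hα a b, map_mul, map_inv]

theorem IsCocycle.twist_apply (hα : IsCocycle φ α) (g : G) (x : N) :
    hα.twist g x = α g * φ g x * (α g)⁻¹ :=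
  rfl

theorem IsCocycle.mul_inv_twist (hβ : IsCocycle φ β) (hα : IsCocycle φ α) :
    IsCocycle hα.twist fun g => β g * (α g)⁻¹ := by
  intro g g'
  dsimp only
  rw [hα, hβ, hα.twist_apply, map_mul, map_inv]
  group

theorem IsCocycle.cohomologous_of_twist (hα : IsCocycle φ α)
    (h : Cohomologous hα.twist 1 fun g => β g * (α g)⁻¹) : Cohomologous φ α β := by
  obtain ⟨n, hn⟩ := h
  refine ⟨n, fun g => ?_⟩
  have := hn g
  rw [hα.twist_apply, Pi.one_apply, mul_one, mul_inv_eq_iff_eq_mul] at this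
  rw [this]
  group

variable {H : Subgroup G}

theorem IsCocycle.apply_mul_of_mem (hδ : IsCocycle φ δ) (hH : ∀ h ∈ H, δ h = 1) (g : G)
    {h : G} (hh : h ∈ H) : δ (g * h) = δ g := by
  rw [hδ, hH h hh, map_one, mul_one]

theorem IsCocycle.map_apply_of_mem [H.Normal] (hδ : IsCocycle φ δ) (hH : ∀ h ∈ H, δ h = 1)
    {h : G} (hh : h ∈ H) (g : G) : φ h (δ g) = δ g := by
  have hconj : g⁻¹ * h * g ∈ H := by simpa using Subgroup.Normal.conj_mem ‹_› h hh g⁻¹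
  calc φ h (δ g) = δ (h * g) := by rw [hδ, hH h hh, one_mul]
    _ = δ (g * (g⁻¹ * h * g)) := by group
    _ = δ g := hδ.apply_mul_of_mem hH g hconj

end Cocycles

section Averaging

variable {G A : Type*} [Group G] [CommGroup A] {τ : G →* MulAut A} {e : G → A}
  {H : Subgroup G} [Fintype (G ⧸ H)]

theorem IsCocycle.pow_card_quotient_eq (he : IsCocycle τ e) (hH : ∀ h ∈ H, e h = 1) (g : G) :
    e g ^ Fintype.card (G ⧸ H) =
      (∏ q : G ⧸ H, e q.out) * (τ g (∏ q : G ⧸ H, e q.out))⁻¹ := by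
  have hout : ∀ q : G ⧸ H, e (g • q).out = e g * τ g (e q.out) := fun q => by
    obtain ⟨h, hq⟩ := QuotientGroup.mk_out_eq_mul H (g * q.out)
    rw [← MulAction.Quotient.mk_smul_out, smul_eq_mul, hq, he.apply_mul_of_mem hH _ h.2, he]
  refine eq_mul_inv_iff_mul_eq.mpr (Eq.symm ?_)
  calc ∏ q : G ⧸ H, e q.out = ∏ q : G ⧸ H, e (g • q).out :=
        (Equiv.prod_comp (MulAction.toPerm g) fun q : G ⧸ H => e q.out).symm
    _ = ∏ q : G ⧸ H, e g * τ g (e q.out) := Finset.prod_congr rfl fun q _ => hout q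
    _ = e g ^ Fintype.card (G ⧸ H) * τ g (∏ q : G ⧸ H, e q.out) := by
      rw [Finset.prod_mul_distrib, Finset.prod_const, Finset.card_univ, map_prod]

theorem IsCocycle.eq_mul_inv_map_of_pow_card (he : IsCocycle τ e) (hH : ∀ h ∈ H, e h = 1)
    (hinj : Function.Injective fun a : A => a ^ Fintype.card (G ⧸ H)) {μ : A}
    (hμ : μ ^ Fintype.card (G ⧸ H) = ∏ q : G ⧸ H, e q.out) (g : G) :
    e g = μ * (τ g μ)⁻¹ := by
  refine hinj ?_
  simp only [he.pow_card_quotient_eq hH g, mul_pow, inv_pow, ← map_pow, hμ]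

end Averaging

theorem Subgroup.Characteristic.apply_mem_iff {G : Type*} [Group G] {K : Subgroup G}
    [hK : K.Characteristic] (f : MulAut G) {x : G} : f x ∈ K ↔ x ∈ K :=
  SetLike.ext_iff.mp (hK.fixed f) x

section LowerCentralSeries

variable {N : Type*} [Group N]

local notation "γ" => Subgroup.lowerCentralSeries (⊤ : Subgroup N)

theorem commute_mk_of_mem_lowerCentralSeries {i : ℕ} {x : N} (hx : x ∈ γ i) (y : N) :
    Commute (x : N ⧸ γ (i + 1)) y := by
  refine Commute.symm ?_
  rw [Commute, SemiconjBy, ← QuotientGroup.mk_mul, ← QuotientGroup.mk_mul, QuotientGroup.eq]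
  have := Subgroup.lowerCentralSeries_isDescendingCentralSeries.2 x⁻¹ i (inv_mem hx) y⁻¹
  simpa [commutatorElement_def, mul_assoc] using this

variable (N) in
def LowerCentralFactor (i : ℕ) : Type _ := ↥(γ i) ⧸ (γ (i + 1)).subgroupOf (γ i)

namespace LowerCentralFactor

instance (i : ℕ) : CommGroup (LowerCentralFactor N i) :=
  { (inferInstance : Group (↥(γ i) ⧸ (γ (i + 1)).subgroupOf (γ i))) with
    mul_comm := by
      rintro ⟨x⟩ ⟨y⟩
      have := commute_mk_of_mem_lowerCentralSeries x.2 y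
      rw [Commute, SemiconjBy, ← QuotientGroup.mk_mul, ← QuotientGroup.mk_mul,
        QuotientGroup.eq] at this
      refine (QuotientGroup.eq (s := (γ (i + 1)).subgroupOf (γ i))).mpr ?_
      rwa [Subgroup.mem_subgroupOf] }

def mk (i : ℕ) : ↥(γ i) →* LowerCentralFactor N i := QuotientGroup.mk' _

theorem mk_surjective (i : ℕ) : Function.Surjective (mk (N := N) i) :=
  QuotientGroup.mk'_surjective _

theorem mk_eq_mk_iff {i : ℕ} {x y : ↥(γ i)} : mk i x = mk i y ↔ (x : N)⁻¹ * y ∈ γ (i + 1) :=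
  QuotientGroup.eq.trans Subgroup.mem_subgroupOf

theorem mk_eq_one_iff {i : ℕ} {x : ↥(γ i)} : mk i x = 1 ↔ (x : N) ∈ γ (i + 1) :=
  (QuotientGroup.eq_one_iff _).trans Subgroup.mem_subgroupOf

def autHom (i : ℕ) : MulAut N →* MulAut (LowerCentralFactor N i) where
  toFun f := QuotientGroup.congr _ _ (MulAut.characteristic (γ i) f) (by
    ext x
    refine Subgroup.mem_map_equiv.trans ?_
    rw [Subgroup.mem_subgroupOf, Subgroup.mem_subgroupOf]
    exact Subgroup.Characteristic.apply_mem_iff f.symm)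
  map_one' := by ext ⟨x⟩; rfl
  map_mul' f g := by ext ⟨x⟩; rfl

theorem autHom_mk {i : ℕ} (f : MulAut N) (x : ↥(γ i)) :
    autHom i f (mk i x) = mk i (MulAut.characteristic (γ i) f x) :=
  rfl

theorem mk_eq_mk_iff_coe_eq {i : ℕ} {x y : ↥(γ i)} :
    mk i x = mk i y ↔ ((x : N) : N ⧸ γ (i + 1)) = (y : N) :=
  mk_eq_mk_iff.trans QuotientGroup.eq.symm

theorem pow_surjective {i m : ℕ} (h : ∀ x ∈ γ i, ∃ y ∈ γ i, x⁻¹ * y ^ m ∈ γ (i + 1)) :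
    Function.Surjective fun a : LowerCentralFactor N i => a ^ m := by
  intro a
  obtain ⟨x, rfl⟩ := mk_surjective i a
  obtain ⟨y, hy, hxy⟩ := h x x.2
  refine ⟨mk i ⟨y, hy⟩, ?_⟩
  show mk i ⟨y, hy⟩ ^ m = mk i x
  rw [← map_pow]
  exact (mk_eq_mk_iff.mpr hxy).symm

theorem pow_injective {i m : ℕ}
    (h : ∀ y ∈ γ i, ∀ z ∈ γ i, (y ^ m)⁻¹ * z ^ m ∈ γ (i + 1) → y⁻¹ * z ∈ γ (i + 1)) :
    Function.Injective fun a : LowerCentralFactor N i => a ^ m := by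
  intro a b hab
  obtain ⟨y, rfl⟩ := mk_surjective i a
  obtain ⟨z, rfl⟩ := mk_surjective i b
  simp only [← map_pow, mk_eq_mk_iff, Subgroup.coe_pow] at hab ⊢
  exact h y y.2 z z.2 hab

end LowerCentralFactor

open LowerCentralFactor in
theorem exists_pow_eq_of_mem_lowerCentralSeries {m c : ℕ}
    (hsurj : ∀ i, Function.Surjective fun a : LowerCentralFactor N i => a ^ m)
    (hbot : γ c = ⊥) {i : ℕ} {x : N} (hx : x ∈ γ i) : ∃ y ∈ γ i, y ^ m = x := by
  have approx : ∀ n, ∃ y ∈ γ i, x⁻¹ * y ^ m ∈ γ (i + n) := by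
    intro n
    induction n with
    | zero => exact ⟨1, one_mem _, by simpa using inv_mem hx⟩
    | succ n ih =>
      obtain ⟨y, hy, hr⟩ := ih
      obtain ⟨c, hc⟩ := hsurj (i + n) (mk _ ⟨(x⁻¹ * y ^ m)⁻¹, inv_mem hr⟩)
      obtain ⟨c, rfl⟩ := mk_surjective _ c
      replace hc : mk _ (c ^ m) = _ := (map_pow _ c m).trans hc
      rw [mk_eq_mk_iff_coe_eq, Subgroup.coe_pow, QuotientGroup.mk_pow] at hc
      have hc' : (c : N) ∈ γ i := Subgroup.lowerCentralSeries_antitone _ (Nat.le_add_right i n) c.2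
      refine ⟨y * c, mul_mem hy hc', ?_⟩
      -- `c` is central modulo `γ (i + n + 1)`, so `(y * c) ^ m = y ^ m * c ^ m` there
      rw [← add_assoc, ← QuotientGroup.eq_one_iff, QuotientGroup.mk_mul, QuotientGroup.mk_pow,
        QuotientGroup.mk_mul, (commute_mk_of_mem_lowerCentralSeries c.2 y).symm.mul_pow, hc]
      simp only [QuotientGroup.mk_inv, QuotientGroup.mk_mul, QuotientGroup.mk_pow]
      group
  obtain ⟨y, hy, hxy⟩ := approx c
  have hbot' : γ (i + c) = ⊥ :=
    eq_bot_mono (Subgroup.lowerCentralSeries_antitone _ (Nat.le_add_left c i)) hbot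
  rw [hbot', Subgroup.mem_bot, inv_mul_eq_one] at hxy
  exact ⟨y, hy, hxy.symm⟩

open LowerCentralFactor in
theorem pow_injective_of_lowerCentralFactor {m c : ℕ}
    (hinj : ∀ i, Function.Injective fun a : LowerCentralFactor N i => a ^ m)
    (hbot : γ c = ⊥) : Function.Injective fun y : N => y ^ m := by
  intro y z hyz
  have key : ∀ n, y⁻¹ * z ∈ γ n := by
    intro n
    induction n with
    | zero => exact Subgroup.mem_top _
    | succ n ih =>
      have hpow : (y⁻¹ * z) ^ m ∈ γ (n + 1) := by
        have hz : (z : N ⧸ γ (n + 1)) = y * ↑(y⁻¹ * z) := by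
          rw [← QuotientGroup.mk_mul, mul_inv_cancel_left]
        have h := congrArg (fun t : N => (t : N ⧸ γ (n + 1))) (hyz : y ^ m = z ^ m)
        simp only [QuotientGroup.mk_pow] at h
        rw [hz, (commute_mk_of_mem_lowerCentralSeries ih y).symm.mul_pow] at h
        rw [← QuotientGroup.eq_one_iff, QuotientGroup.mk_pow]
        exact mul_eq_left.mp h.symm
      rw [← mk_eq_one_iff (x := ⟨_, ih⟩)]
      refine hinj n ?_
      show mk n ⟨_, ih⟩ ^ m = 1 ^ m
      rw [← map_pow, one_pow, mk_eq_one_iff]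
      exact hpow
  have := key c
  rwa [hbot, Subgroup.mem_bot, inv_mul_eq_one] at this

end LowerCentralSeries

section Descent

variable {G N : Type*} [Group G] [Group N] {ψ : G →* MulAut N} {H : Subgroup G}
  [H.Normal] [H.FiniteIndex]

local notation "γ" => Subgroup.lowerCentralSeries (⊤ : Subgroup N)

open LowerCentralFactor in
theorem IsCocycle.exists_inv_mul_map_mem_succ {d : G → N} (hd : IsCocycle ψ d)
    (hH : ∀ h ∈ H, d h = 1) {i : ℕ} (hi : ∀ g, d g ∈ γ i)
    (hroot : ∀ x ∈ γ i, ∃ y ∈ γ i, y ^ H.index = x)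
    (hinj : Function.Injective fun y : N => y ^ H.index)
    (hinjA : Function.Injective fun a : LowerCentralFactor N i => a ^ H.index) :
    ∃ n : N, (∀ h ∈ H, ψ h n = n) ∧ ∀ g, n⁻¹ * d g * ψ g n ∈ γ (i + 1) := by
  let := Fintype.ofFinite (G ⧸ H)
  have hk : Fintype.card (G ⧸ H) = H.index := by rw [H.index_eq_card, Nat.card_eq_fintype_card]
  let e : G → LowerCentralFactor N i := fun g => mk i ⟨d g, hi g⟩
  have he : IsCocycle ((autHom i).comp ψ) e := fun g g' => by
    simp only [e, MonoidHom.comp_apply, autHom_mk, ← map_mul]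
    congr 1
    ext
    exact hd g g'
  have heH : ∀ h ∈ H, e h = 1 := fun h hh => by
    simp only [e, hH h hh]
    rfl
  let F : Subgroup ↥(γ i) :=
    ⨅ h : H, MonoidHom.eqLocus (MulAut.characteristic (γ i) (ψ h)).toMonoidHom (MonoidHom.id _)
  obtain ⟨σ, hσF, hσ⟩ : ∃ σ ∈ F, mk i σ = ∏ q : G ⧸ H, e q.out :=
    Subgroup.prod_mem (F.map (mk i)) fun q _ => Subgroup.mem_map_of_mem _ <|
      Subgroup.mem_iInf.mpr fun h => Subtype.ext (hd.map_apply_of_mem hH h.2 q.out)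
  obtain ⟨n, hn, hnσ⟩ := hroot σ σ.2
  have hnfix : ∀ h ∈ H, ψ h n = n := fun h hh => hinj <| by
    simp only [← map_pow, hnσ]
    exact congrArg Subtype.val (Subgroup.mem_iInf.mp hσF ⟨h, hh⟩)
  refine ⟨n, hnfix, fun g => ?_⟩
  have hμ : mk i ⟨n, hn⟩ ^ Fintype.card (G ⧸ H) = ∏ q : G ⧸ H, e q.out := by
    rw [← map_pow, hk, ← hσ]
    congr 1
    exact Subtype.ext hnσ
  have hg := he.eq_mul_inv_map_of_pow_card heH (hk ▸ hinjA) hμ g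
  rw [MonoidHom.comp_apply, autHom_mk] at hg
  have key : mk i (⟨n, hn⟩⁻¹ * ⟨d g, hi g⟩ * MulAut.characteristic (γ i) (ψ g) ⟨n, hn⟩) = 1 := by
    rw [map_mul, map_mul, map_inv]
    change _ * e g * _ = 1
    rw [hg, inv_mul_cancel_left, inv_mul_cancel]
  exact mk_eq_one_iff.mp key

theorem cohomologous_one_of_mem_lowerCentralSeries {c : ℕ} (hbot : γ c = ⊥)
    (hsurj : ∀ i, Function.Surjective fun a : LowerCentralFactor N i => a ^ H.index)
    (hinj : ∀ i, Function.Injective fun a : LowerCentralFactor N i => a ^ H.index) (n : ℕ) :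
    ∀ {i : ℕ} {d : G → N}, c ≤ i + n → IsCocycle ψ d → (∀ h ∈ H, d h = 1) →
      (∀ g, d g ∈ γ i) → Cohomologous ψ 1 d := by
  induction n with
  | zero =>
    intro i d hc _ _ hi
    refine ⟨1, fun g => ?_⟩
    have := hi g
    have hbot' : γ i = ⊥ := eq_bot_mono (Subgroup.lowerCentralSeries_antitone _ hc) hbot
    rw [hbot', Subgroup.mem_bot] at this
    simp [this]
  | succ n ih =>
    intro i d hc hd hH hi
    obtain ⟨m, hmH, hm⟩ := hd.exists_inv_mul_map_mem_succ hH hi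
      (fun _ hx => exists_pow_eq_of_mem_lowerCentralSeries hsurj hbot hx)
      (pow_injective_of_lowerCentralFactor hinj hbot) (hinj i)
    have hdm : Cohomologous ψ d fun g => m⁻¹ * d g * ψ g m := ⟨m, fun _ => rfl⟩
    refine (ih (by omega) (hd.of_cohomologous hdm) (fun h hh => ?_) hm).trans hdm.symm
    rw [hH h hh, hmH h hh, mul_one, inv_mul_cancel]

theorem IsCocycle.cohomologous_one_of_eq_one [Group.IsNilpotent N] {d : G → N}
    (hd : IsCocycle ψ d) (hH : ∀ h ∈ H, d h = 1)
    (hsurj : ∀ i, Function.Surjective fun a : LowerCentralFactor N i => a ^ H.index)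
    (hinj : ∀ i, Function.Injective fun a : LowerCentralFactor N i => a ^ H.index) :
    Cohomologous ψ 1 d := by
  obtain ⟨c, hbot⟩ := Subgroup.nilpotent_iff_lowerCentralSeries.mp ‹Group.IsNilpotent N›
  exact cohomologous_one_of_mem_lowerCentralSeries hbot hsurj hinj c (i := 0) (by omega) hd hH
    fun _ => Subgroup.mem_top _

end Descent

/-- If `H ⊴ G` has finite index and `N` is a nilpotent `G`-group all of whose lower
central series quotients are uniquely divisible abelian groups, then the restriction map
`H¹(G, N) → H¹(H, N)` is injective: two cocycles on `G` which become cohomologous after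
restriction to `H` are already cohomologous on `G`. -/
theorem restriction_injective_of_finite_index
    {G N : Type*} [Group G] [Group N] (φ : G →* MulAut N)
    (H : Subgroup G) [H.Normal] [H.FiniteIndex]
    [Group.IsNilpotent N]
    (h_div : ∀ i : ℕ, ∀ x ∈ (⊤ : Subgroup N).lowerCentralSeries i, ∀ m : ℕ, 0 < m →
      ∃ y ∈ (⊤ : Subgroup N).lowerCentralSeries i, x⁻¹ * y ^ m ∈ (⊤ : Subgroup N).lowerCentralSeries (i + 1))
    (h_uniq : ∀ i : ℕ, ∀ m : ℕ, 0 < m → ∀ y ∈ (⊤ : Subgroup N).lowerCentralSeries i,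
      ∀ z ∈ (⊤ : Subgroup N).lowerCentralSeries i,
      (y ^ m)⁻¹ * z ^ m ∈ (⊤ : Subgroup N).lowerCentralSeries (i + 1) →
        y⁻¹ * z ∈ (⊤ : Subgroup N).lowerCentralSeries (i + 1)) :
    ∀ α α' : G → N, IsCocycle φ α → IsCocycle φ α' →
      (∃ n : N, ∀ h ∈ H, α' h = n⁻¹ * α h * φ h n) →
      Cohomologous φ α α' := by
  rintro α α' hα hα' ⟨n, hn⟩
  have hk : 0 < H.index := Nat.pos_of_ne_zero H.index_ne_zero_of_finite
  have hαβ : Cohomologous φ α fun g => n⁻¹ * α g * φ g n := ⟨n, fun _ => rfl⟩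
  have hβ := hα.of_cohomologous hαβ
  refine hαβ.trans (hβ.cohomologous_of_twist ?_)
  refine (hα'.mul_inv_twist hβ).cohomologous_one_of_eq_one (H := H) (fun h hh => ?_)
    (fun i => LowerCentralFactor.pow_surjective fun x hx => h_div i x hx _ hk)
    (fun i => LowerCentralFactor.pow_injective fun y hy z hz => h_uniq i _ hk y hy z hz)
  rw [hn h hh, mul_inv_cancel]
end
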